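/- Let k ∈ ℝ, ε₁ ≥ 0, T > 0, let R : ℝ → (ℝⁿ →L[ℝ] ℝⁿ) be continuous with ‖R(t) − k·id‖ ≤ ε₁ for all t ∈ [0, T], and let y : ℝ → ℝⁿ be twice differentiable with y''(t) + R(t) y(t) = 0 on [0, T]. Set V(t) = √(‖y(t)‖²·‖y'(t)‖² − ⟨y(t), y'(t)⟩²). If V(T) = 0 (i.e. y(T) and y'(T) are linearly dependent), then V(0) ≤ ε₁·∫₀ᵀ ‖y(s)‖² ds. -/

import Mathlib

open scoped InnerProductSpace
open Real

/-!
With `W = ‖y‖²‖y'‖² - ⟪y, y'⟫²` the Gram determinant, `V = √W` and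
`W' = 2⟪z, y''⟫` with `z = ‖y‖² y' - ⟪y, y'⟫ y`. Since `z ⊥ y` and `‖z‖ = ‖y‖ √W`, the ODE gives
`⟪z, y''⟫ = -⟪z, (R - k) y⟫`, so `|W'| ≤ 2 ε₁ ‖y‖² √W`, i.e. formally `|V'| ≤ ε₁ ‖y‖²`;
integrating from `0` to `T` with `V T = 0` gives the bound. The square root is not differentiable
where `W = 0`, so one integrates `√(W + ε²)` instead and lets `ε → 0`.
-/

open Set MeasureTheory

section GramDeterminant

variable {E : Type*} [NormedAddCommGroup E] [InnerProductSpace ℝ E]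

def gramDet (u v : E) : ℝ := ‖u‖ ^ 2 * ‖v‖ ^ 2 - ⟪u, v⟫_ℝ ^ 2

def scaledRejection (u v : E) : E := ‖u‖ ^ 2 • v - ⟪u, v⟫_ℝ • u

theorem gramDet_nonneg (u v : E) : 0 ≤ gramDet u v := by
  rw [gramDet, sub_nonneg, ← mul_pow, ← sq_abs]
  exact pow_le_pow_left₀ (abs_nonneg _) (abs_real_inner_le_norm u v) 2

theorem inner_scaledRejection_self (u v : E) : ⟪scaledRejection u v, u⟫_ℝ = 0 := by
  simp only [scaledRejection, inner_sub_left, real_inner_smul_left, real_inner_self_eq_norm_sq,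
    real_inner_comm u v]
  ring

theorem norm_scaledRejection (u v : E) : ‖scaledRejection u v‖ = ‖u‖ * √(gramDet u v) := by
  have hsq : ‖scaledRejection u v‖ ^ 2 = ‖u‖ ^ 2 * gramDet u v := by
    simp only [← real_inner_self_eq_norm_sq, scaledRejection, gramDet, inner_sub_left,
      inner_sub_right, real_inner_smul_left, real_inner_smul_right, real_inner_comm u v]
    ring
  rw [← sqrt_sq (norm_nonneg _), hsq, sqrt_mul (sq_nonneg _), sqrt_sq (norm_nonneg _)]

theorem abs_inner_scaledRejection_le (u v w : E) (k : ℝ) :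
    |⟪scaledRejection u v, w⟫_ℝ| ≤ ‖u‖ * √(gramDet u v) * ‖w + k • u‖ := by
  have hshift : ⟪scaledRejection u v, w⟫_ℝ = ⟪scaledRejection u v, w + k • u⟫_ℝ := by
    rw [inner_add_right, real_inner_smul_right, inner_scaledRejection_self, mul_zero, add_zero]
  rw [hshift, ← norm_scaledRejection]
  exact abs_real_inner_le_norm _ _

theorem HasDerivAt.gramDet {y y' : ℝ → E} {a : E} {t : ℝ} (hy : HasDerivAt y (y' t) t)
    (hy' : HasDerivAt y' a t) :
    HasDerivAt (fun s => gramDet (y s) (y' s)) (2 * ⟪scaledRejection (y t) (y' t), a⟫_ℝ) t := by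
  have hW : (fun s => _root_.gramDet (y s) (y' s)) =
      fun s => ⟪y s, y s⟫_ℝ * ⟪y' s, y' s⟫_ℝ - ⟪y s, y' s⟫_ℝ ^ 2 := by
    funext s
    simp only [_root_.gramDet, real_inner_self_eq_norm_sq]
  rw [hW]
  refine (((hy.inner ℝ hy).mul (hy'.inner ℝ hy')).sub ((hy.inner ℝ hy').pow 2)).congr_deriv ?_
  simp only [scaledRejection, inner_sub_left, real_inner_smul_left, real_inner_self_eq_norm_sq,
    real_inner_comm (y' t) (y t), real_inner_comm a (y' t)]
  ring

end GramDeterminant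

theorem sqrt_le_sqrt_add_integral_of_neg_deriv_le {W W' g : ℝ → ℝ} {a b : ℝ} (hab : a ≤ b)
    (hW : ∀ t ∈ Icc a b, HasDerivAt W (W' t) t) (hW0 : ∀ t ∈ Icc a b, 0 ≤ W t)
    (hg : IntegrableOn g (Icc a b)) (hg0 : ∀ t ∈ Icc a b, 0 ≤ g t)
    (hW' : ∀ t ∈ Icc a b, -(2 * g t * √(W t)) ≤ W' t) :
    √(W a) ≤ √(W b) + ∫ t in a..b, g t := by
  refine le_of_forall_pos_le_add fun ε hε => ?_
  have hpos : ∀ t ∈ Icc a b, 0 < W t + ε ^ 2 := fun t ht => by nlinarith [hW0 t ht]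
  have hF : ∀ t ∈ Icc a b,
      HasDerivAt (fun s => -√(W s + ε ^ 2)) (-(W' t / (2 * √(W t + ε ^ 2)))) t :=
    fun t ht => (((hW t ht).add_const _).sqrt (hpos t ht).ne').neg
  have hdecay : √(W a + ε ^ 2) - √(W b + ε ^ 2) ≤ ∫ t in a..b, g t := by
    have := intervalIntegral.sub_le_integral_of_hasDeriv_right_of_le hab
      (fun t ht => (hF t ht).continuousAt.continuousWithinAt)
      (fun t ht => (hF t (Ioo_subset_Icc_self ht)).hasDerivWithinAt) hg ?_
    · linarith
    intro t ht
    have ht := Ioo_subset_Icc_self ht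
    have hmono : g t * √(W t) ≤ g t * √(W t + ε ^ 2) :=
      mul_le_mul_of_nonneg_left (sqrt_le_sqrt (by nlinarith)) (hg0 t ht)
    rw [← neg_div, div_le_iff₀ (mul_pos two_pos (sqrt_pos.2 (hpos t ht)))]
    linarith [hW' t ht]
  have hb := hW0 b (right_mem_Icc.2 hab)
  calc √(W a) ≤ √(W a + ε ^ 2) := sqrt_le_sqrt (by nlinarith)
    _ ≤ √(W b + ε ^ 2) + ∫ t in a..b, g t := by linarith
    _ ≤ √(W b) + ε + ∫ t in a..b, g t := by
      gcongr
      exact sqrt_le_iff.2 ⟨by positivity, by nlinarith [sq_sqrt hb, sqrt_nonneg (W b)]⟩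
    _ = _ := by ring

theorem stmt_6_general {n : ℕ} (k ε₁ T : ℝ) (hε₁ : 0 ≤ ε₁) (hT : 0 < T)
    (R : ℝ → EuclideanSpace ℝ (Fin n) →L[ℝ] EuclideanSpace ℝ (Fin n))
    (hR : ∀ t ∈ Set.Icc (0 : ℝ) T,
      ‖R t - k • ContinuousLinearMap.id ℝ (EuclideanSpace ℝ (Fin n))‖ ≤ ε₁)
    (y y' y'' : ℝ → EuclideanSpace ℝ (Fin n))
    (hy : ∀ t, HasDerivAt y (y' t) t) (hy' : ∀ t, HasDerivAt y' (y'' t) t)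
    (hode : ∀ t ∈ Set.Icc (0 : ℝ) T, y'' t + R t (y t) = 0)
    (V : ℝ → ℝ)
    (hV : ∀ t, V t = Real.sqrt (‖y t‖ ^ 2 * ‖y' t‖ ^ 2 - ⟪y t, y' t⟫_ℝ ^ 2))
    (hVT : V T = 0) :
    V 0 ≤ ε₁ * ∫ s in (0:ℝ)..T, ‖y s‖ ^ 2 := by
  have hVgram : ∀ t, V t = √(gramDet (y t) (y' t)) := hV
  have hy_cont : Continuous y := Differentiable.continuous fun t => (hy t).differentiableAt
  have hdefect : ∀ t ∈ Icc 0 T, ‖y'' t + k • y t‖ ≤ ε₁ * ‖y t‖ := by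
    intro t ht
    have hacc : y'' t + k • y t =
        -((R t - k • ContinuousLinearMap.id ℝ (EuclideanSpace ℝ (Fin n))) (y t)) := by
      rw [eq_neg_of_add_eq_zero_left (hode t ht)]
      simp [neg_add_eq_sub]
    rw [hacc, norm_neg]
    exact ((R t - _).le_opNorm _).trans (mul_le_mul_of_nonneg_right (hR t ht) (norm_nonneg _))
  have hderiv_bound : ∀ t ∈ Icc 0 T, -(2 * (ε₁ * ‖y t‖ ^ 2) * √(gramDet (y t) (y' t))) ≤
      2 * ⟪scaledRejection (y t) (y' t), y'' t⟫_ℝ := by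
    intro t ht
    have h := neg_abs_le ⟪scaledRejection (y t) (y' t), y'' t⟫_ℝ
    have h' := abs_inner_scaledRejection_le (y t) (y' t) (y'' t) k
    have h'' := mul_le_mul_of_nonneg_left (hdefect t ht)
      (by positivity : 0 ≤ ‖y t‖ * √(gramDet (y t) (y' t)))
    nlinarith
  have key := sqrt_le_sqrt_add_integral_of_neg_deriv_le hT.le
    (fun t _ => (hy t).gramDet (hy' t)) (fun t _ => gramDet_nonneg _ _)
    (by fun_prop : Continuous fun s => ε₁ * ‖y s‖ ^ 2).integrableOn_Icc
    (fun t _ => by positivity) hderiv_bound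
  rw [hVgram] at hVT ⊢
  rwa [hVT, zero_add, intervalIntegral.integral_const_mul] at key

/-- If `‖R(t) − k·id‖ ≤ ε₁` on `[0,T]`, `y'' + R(t) y = 0` on `[0,T]`, and the parallelogram
area `V(T) = 0` (i.e. `y(T)` and `y'(T)` are linearly dependent), then
`V(0) ≤ ε₁·∫₀ᵀ ‖y(s)‖² ds`. -/
theorem stmt_6 {n : ℕ} (k ε₁ T : ℝ) (hε₁ : 0 ≤ ε₁) (hT : 0 < T)
    (R : ℝ → EuclideanSpace ℝ (Fin n) →L[ℝ] EuclideanSpace ℝ (Fin n))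
    (hRcont : Continuous R)
    (hR : ∀ t ∈ Set.Icc (0 : ℝ) T,
      ‖R t - k • ContinuousLinearMap.id ℝ (EuclideanSpace ℝ (Fin n))‖ ≤ ε₁)
    (y y' y'' : ℝ → EuclideanSpace ℝ (Fin n))
    (hy : ∀ t, HasDerivAt y (y' t) t) (hy' : ∀ t, HasDerivAt y' (y'' t) t)
    (hode : ∀ t ∈ Set.Icc (0 : ℝ) T, y'' t + R t (y t) = 0)
    (V : ℝ → ℝ)
    (hV : ∀ t, V t = Real.sqrt (‖y t‖ ^ 2 * ‖y' t‖ ^ 2 - ⟪y t, y' t⟫_ℝ ^ 2))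
    (hVT : V T = 0) :
    V 0 ≤ ε₁ * ∫ s in (0:ℝ)..T, ‖y s‖ ^ 2 :=
  stmt_6_general k ε₁ T hε₁ hT R hR y y' y'' hy hy' hode V hV hVT
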